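/- For each fixed λ ∈ ℂ and k ≥ 1, let φ(t) = b_k(t) − λ·a_{k−1}(t), a monic polynomial of degree k with roots t^{(1)}, …, t^{(k)}. Then ∏_{j=1}^{k} a_{k−1}(t^{(j)}) = (−1)^{k(k−1)/2}. -/

import Mathlib

/-!
Both `φ = bₖ - λ aₖ₋₁` and `aₖ` have the form `(X - c) aₖ₋₁ - aₖ₋₂`, so at every root of `aₖ₋₁`
they take the value `-aₖ₋₂`. Exchanging the roles of the two monic polynomials in
`∏_{f(t) = 0} g(t)` (the resultant, up to the sign `(-1)^(deg f * deg g)`, here `+1`) gives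
`∏_{φ(t) = 0} aₖ₋₁(t) = (-1)^(k-1) ∏_{aₖ₋₁(t) = 0} aₖ₋₂(t)`, and the last product is the same
quantity one step lower, computed by induction along `aₖ = (X - 2) aₖ₋₁ - aₖ₋₂`.
-/

open Polynomial

noncomputable def aSeq : ℕ → Polynomial ℂ
  | 0 => 1
  | 1 => X - 1
  | (k + 2) => (X - 2) * aSeq (k + 1) - aSeq k

noncomputable def bSeq : ℕ → Polynomial ℂ
  | 0 => 1
  | 1 => X - 1
  | (k + 2) => (X - 1) * aSeq (k + 1) - aSeq k

theorem Nat.add_one_add_mul_div_two (n : ℕ) : n + 1 + (n + 1) * n / 2 = (n + 2) * (n + 1) / 2 := by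
  rw [show (n + 2) * (n + 1) = (n + 1) * n + 2 * (n + 1) by ring,
    Nat.add_mul_div_left _ _ two_pos]
  omega

namespace Polynomial

theorem prod_roots_map_eval_comm {R : Type*} [CommRing R] [IsDomain R] {f g : R[X]}
    (hf : f.Monic) (hg : g.Monic) (hf' : f.Splits) (hg' : g.Splits) :
    (f.roots.map g.eval).prod = (-1) ^ (f.natDegree * g.natDegree) * (g.roots.map f.eval).prod := by
  have hfg := resultant_eq_prod_eval f g g.natDegree le_rfl hf'
  have hgf := resultant_eq_prod_eval g f f.natDegree le_rfl hg'
  rw [hf.leadingCoeff, one_pow, one_mul] at hfg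
  rw [hg.leadingCoeff, one_pow, one_mul] at hgf
  rw [← hfg, ← hgf, resultant_comm]

theorem Monic.X_sub_C_mul_sub {R : Type*} [CommRing R] [Nontrivial R] {p q : R[X]}
    (hp : p.Monic) (hq : q.natDegree ≤ p.natDegree) (c : R) :
    ((X - C c) * p - q).Monic ∧ ((X - C c) * p - q).natDegree = p.natDegree + 1 := by
  have hm : ((X - C c) * p).Monic := (monic_X_sub_C c).mul hp
  have hd : ((X - C c) * p).natDegree = p.natDegree + 1 := by
    rw [(monic_X_sub_C c).natDegree_mul hp, natDegree_X_sub_C, add_comm]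
  have hlt : q.natDegree < ((X - C c) * p).natDegree := by omega
  refine ⟨hm.sub_of_left (degree_lt_degree hlt), ?_⟩
  rw [natDegree_sub_eq_left_of_natDegree_lt hlt, hd]

end Polynomial

theorem aSeq_one : aSeq 1 = X - C 1 := by
  simp [aSeq]

theorem aSeq_add_two (n : ℕ) : aSeq (n + 2) = (X - C 2) * aSeq (n + 1) - aSeq n := by
  rw [aSeq, map_ofNat]

theorem bSeq_add_two_sub_C_mul_aSeq (n : ℕ) (lam : ℂ) :
    bSeq (n + 2) - C lam * aSeq (n + 1) = (X - C (1 + lam)) * aSeq (n + 1) - aSeq n := by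
  simp only [bSeq, map_add, map_one]
  ring

theorem aSeq_monic_and_natDegree (n : ℕ) : (aSeq n).Monic ∧ (aSeq n).natDegree = n := by
  induction n using Nat.twoStepInduction with
  | zero => simp [aSeq]
  | one => exact aSeq_one ▸ ⟨monic_X_sub_C 1, natDegree_X_sub_C 1⟩
  | more n _ ih =>
    obtain ⟨hm, hd⟩ := ih.1.X_sub_C_mul_sub (q := aSeq n) (by omega) 2
    rw [ih.2] at hd
    exact aSeq_add_two n ▸ ⟨hm, hd⟩

theorem aSeq_monic (n : ℕ) : (aSeq n).Monic := (aSeq_monic_and_natDegree n).1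

theorem aSeq_natDegree (n : ℕ) : (aSeq n).natDegree = n := (aSeq_monic_and_natDegree n).2

theorem prod_roots_map_eval_aSeq_succ (n : ℕ) (c : ℂ) :
    (((X - C c) * aSeq (n + 1) - aSeq n).roots.map (aSeq (n + 1)).eval).prod
      = (-1) ^ (n + 1) * ((aSeq (n + 1)).roots.map (aSeq n).eval).prod := by
  set f := (X - C c) * aSeq (n + 1) - aSeq n
  obtain ⟨hfm, hfd⟩ := (aSeq_monic (n + 1)).X_sub_C_mul_sub (q := aSeq n)
    (by simp [aSeq_natDegree]) c
  have hroots : (aSeq (n + 1)).roots.map f.eval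
      = ((aSeq (n + 1)).roots.map (aSeq n).eval).map Neg.neg := by
    rw [Multiset.map_map]
    refine Multiset.map_congr rfl fun s hs ↦ ?_
    have : (aSeq (n + 1)).eval s = 0 := (mem_roots (aSeq_monic _).ne_zero).mp hs
    simp [f, this]
  have hsign : Even ((n + 2) * (n + 1)) := Nat.even_mul_pred_self (n + 2)
  rw [prod_roots_map_eval_comm hfm (aSeq_monic _) (IsAlgClosed.splits _) (IsAlgClosed.splits _),
    hfd, aSeq_natDegree, hsign.neg_one_pow, one_mul, hroots, Multiset.prod_map_neg,
    Multiset.card_map, ← (IsAlgClosed.splits _).natDegree_eq_card_roots, aSeq_natDegree]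

theorem prod_roots_aSeq_succ_map_eval_aSeq (n : ℕ) :
    ((aSeq (n + 1)).roots.map (aSeq n).eval).prod = (-1) ^ ((n + 1) * n / 2) := by
  induction n with
  | zero => simp [aSeq]
  | succ n ih =>
    rw [aSeq_add_two, prod_roots_map_eval_aSeq_succ, ih, ← pow_add,
      Nat.add_one_add_mul_div_two]

theorem prod_a_pred_over_roots_phi (k : ℕ) (hk : 1 ≤ k) (lam : ℂ) :
    (((bSeq k - Polynomial.C lam * aSeq (k - 1)).roots).map
        fun s => (aSeq (k - 1)).eval s).prod
      = (-1) ^ (k * (k - 1) / 2) := by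
  obtain ⟨n, rfl⟩ := Nat.exists_eq_add_of_le' hk
  cases n with
  | zero => simp [aSeq]
  | succ n =>
    rw [Nat.add_sub_cancel, bSeq_add_two_sub_C_mul_aSeq, prod_roots_map_eval_aSeq_succ,
      prod_roots_aSeq_succ_map_eval_aSeq, ← pow_add, Nat.add_one_add_mul_div_two]
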